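/- arXiv:0707.4607 — 4 statements merged into one kernel-verified Lean document; each statement's English description precedes it below -/
import Mathlib

section
/- The determinant of the 4×4 matrix M(w,φ) with rows [−2iw, −iw e^{iφ}, −5+e^{iφ}, 4e^{iφ/2}], [−iw, −2iw e^{iφ}, −1+5e^{iφ}, −4e^{iφ/2}], [25−5e^{−iφ}, −25+5e^{iφ}, −iw(8−2cos φ), −4iw cos(φ/2)], [−20, 20e^{iφ}, −2iw(1+e^{iφ}), −16iw e^{iφ/2}] vanishes if and only if w² = 4(26 + 4cos φ ± √(474 + 448cos φ − 22cos 2φ))/(6 − 2cos φ), for real φ with cos φ ≠ 3. -/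
/-!
With `z = e^{iφ/2}` every entry of `M(w, φ)` is a Laurent polynomial in `z`, and expanding the
determinant gives `det M = -60 z³ q(cos φ, w²)` with the real quadratic
`q(c, x) = (2c - 6) x² + (208 + 32c) x + 480 (c - 1)`. Its discriminant is
`64 (496 + 448c - 44c²) = 64 (474 + 448 cos φ - 22 cos 2φ)`, which is nonnegative for `|c| ≤ 1`,
so the two dispersion branches are the roots given by the quadratic formula.
-/

open Complex Real Matrix

theorem Complex.cos_eq_exp_mul_I_add_inv (x : ℂ) : cos x = (exp (I * x) + (exp (I * x))⁻¹) / 2 := by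
  rw [cos, ← exp_neg]; ring_nf

def dispersionPoly {R : Type*} [CommRing R] (c x : R) : R :=
  (2 * c - 6) * (x * x) + (208 + 32 * c) * x + 480 * (c - 1)

theorem ofReal_dispersionPoly (c x : ℝ) :
    ((dispersionPoly c x : ℝ) : ℂ) = dispersionPoly (c : ℂ) (x : ℂ) := by
  simp [dispersionPoly]

/-- `M(w, φ)` with `e^{iφ/2}` replaced by `z`. -/
noncomputable def symbolMatrix (w z : ℂ) : Matrix (Fin 4) (Fin 4) ℂ :=
  !![-2 * I * w, -I * w * z ^ 2, -5 + z ^ 2, 4 * z;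
    -I * w, -2 * I * w * z ^ 2, -1 + 5 * z ^ 2, -4 * z;
    25 - 5 * (z ^ 2)⁻¹, -25 + 5 * z ^ 2, -I * w * (8 - 2 * ((z ^ 2 + (z ^ 2)⁻¹) / 2)),
      -4 * I * w * ((z + z⁻¹) / 2);
    -20, 20 * z ^ 2, -2 * I * w * (1 + z ^ 2), -16 * I * w * z]

theorem det_symbolMatrix (w z : ℂ) (hz : z ≠ 0) :
    (symbolMatrix w z).det = -60 * z ^ 3 * dispersionPoly ((z ^ 2 + (z ^ 2)⁻¹) / 2) (w ^ 2) := by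
  rw [symbolMatrix, det_succ_row_zero]
  simp only [Fin.sum_univ_succ, det_fin_three, submatrix_apply, of_apply, Fin.succAbove,
    cons_val', cons_val_fin_one, cons_val_zero, cons_val_one, cons_val, cons_val_succ, Fin.isValue,
    Fin.succ_zero_eq_one, Fin.succ_one_eq_two, Fin.castSucc_zero, Fin.castSucc_one, Fin.reduceSucc,
    Fin.reduceCastSucc, Fin.coe_ofNat_eq_mod, Fin.val_succ, Fin.succ_pos, Fin.lt_one_iff, Fin.reduceEq,
    Fin.reduceLT, lt_self_iff_false, not_lt_zero, ↓reduceIte, Nat.zero_mod, zero_add, pow_zero,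
    pow_one, Finset.univ_unique, Fin.default_eq_zero,
    Fin.val_eq_zero, Finset.sum_singleton, dispersionPoly]
  field_simp
  ring_nf
  simp only [I_sq, I_pow_four]
  ring

theorem discrim_dispersionPoly (c : ℝ) :
    discrim (2 * c - 6) (208 + 32 * c) (480 * (c - 1)) = 64 * (496 + 448 * c - 44 * c ^ 2) := by
  rw [discrim]; ring

theorem dispersionPoly_eq_zero_iff {c : ℝ} (hc : c ≠ 3) (hD : 0 ≤ 496 + 448 * c - 44 * c ^ 2)
    (x : ℝ) :
    dispersionPoly c x = 0 ↔
      x = 4 * (26 + 4 * c + √(496 + 448 * c - 44 * c ^ 2)) / (6 - 2 * c) ∨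
      x = 4 * (26 + 4 * c - √(496 + 448 * c - 44 * c ^ 2)) / (6 - 2 * c) := by
  set s := √(496 + 448 * c - 44 * c ^ 2)
  have hs : s * s = 496 + 448 * c - 44 * c ^ 2 := Real.mul_self_sqrt hD
  have ha : 6 - 2 * c ≠ 0 := by contrapose! hc; linarith
  have ha' : 2 * c - 6 ≠ 0 := by contrapose! hc; linarith
  have hdisc : discrim (2 * c - 6) (208 + 32 * c) (480 * (c - 1)) = (8 * s) * (8 * s) := by
    rw [discrim_dispersionPoly]; linear_combination -64 * hs
  rw [dispersionPoly, quadratic_eq_zero_iff ha' hdisc, or_comm]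
  congr! 2 <;> rw [div_eq_div_iff (mul_ne_zero two_ne_zero ha') ha] <;> ring

/-- The determinant of the 4×4 symbol matrix of the P1DG–P2 semi-discrete
one-dimensional wave equation vanishes iff `w² = 4(26 + 4cos φ ±
√(474 + 448cos φ − 22cos 2φ))/(6 − 2cos φ)`. -/
theorem det_symbol_matrix_eq_zero_iff_dispersion
    (w φ : ℝ) (hφ : Real.cos φ ≠ 3) :
    ((!![-2 * Complex.I * w, -Complex.I * w * Complex.exp (Complex.I * φ),
          -5 + Complex.exp (Complex.I * φ), 4 * Complex.exp (Complex.I * φ / 2);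
        -Complex.I * w, -2 * Complex.I * w * Complex.exp (Complex.I * φ),
          -1 + 5 * Complex.exp (Complex.I * φ), -4 * Complex.exp (Complex.I * φ / 2);
        25 - 5 * Complex.exp (-(Complex.I * φ)), -25 + 5 * Complex.exp (Complex.I * φ),
          -Complex.I * w * (8 - 2 * (Real.cos φ : ℂ)),
          -4 * Complex.I * w * (Real.cos (φ / 2) : ℂ);
        -20, 20 * Complex.exp (Complex.I * φ),
          -2 * Complex.I * w * (1 + Complex.exp (Complex.I * φ)),
          -16 * Complex.I * w * Complex.exp (Complex.I * φ / 2)] : Matrix (Fin 4) (Fin 4) ℂ).det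
       = 0)
    ↔ (w ^ 2 = 4 * (26 + 4 * Real.cos φ
          + Real.sqrt (474 + 448 * Real.cos φ - 22 * Real.cos (2 * φ)))
            / (6 - 2 * Real.cos φ)
      ∨ w ^ 2 = 4 * (26 + 4 * Real.cos φ
          - Real.sqrt (474 + 448 * Real.cos φ - 22 * Real.cos (2 * φ)))
            / (6 - 2 * Real.cos φ)) := by
  set z := Complex.exp (Complex.I * φ / 2)
  have hz : z ≠ 0 := Complex.exp_ne_zero _
  have hz2 : Complex.exp (Complex.I * φ) = z ^ 2 := by
    rw [← Complex.exp_nat_mul]; congr 1; push_cast; ring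
  have hcos : (Real.cos φ : ℂ) = (z ^ 2 + (z ^ 2)⁻¹) / 2 := by
    rw [ofReal_cos, cos_eq_exp_mul_I_add_inv, hz2]
  have hcos_half : (Real.cos (φ / 2) : ℂ) = (z + z⁻¹) / 2 := by
    rw [ofReal_cos, ofReal_div, ofReal_ofNat, cos_eq_exp_mul_I_add_inv, ← mul_div_assoc]
  have hD : 0 ≤ 496 + 448 * Real.cos φ - 44 * Real.cos φ ^ 2 := by
    nlinarith [Real.cos_le_one φ, Real.neg_one_le_cos φ]
  have hdisc : 474 + 448 * Real.cos φ - 22 * Real.cos (2 * φ)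
      = 496 + 448 * Real.cos φ - 44 * Real.cos φ ^ 2 := by
    rw [Real.cos_two_mul]; ring
  rw [Complex.exp_neg, hz2, hcos, hcos_half]
  change (symbolMatrix w z).det = 0 ↔ _
  rw [det_symbolMatrix w z hz, ← hcos, ← ofReal_pow, ← ofReal_dispersionPoly, mul_eq_zero,
    or_iff_right (mul_ne_zero (by norm_num) (pow_ne_zero 3 hz)), ofReal_eq_zero, hdisc]
  exact dispersionPoly_eq_zero_iff hφ hD _
end

section
/- The lower branch frequency w₋(φ) = 2√((26 + 4cos φ − √(474 + 448cos φ − 22cos 2φ))/(6 − 2cos φ)) is a strictly monotonically increasing function of φ on the interval (0, π). -/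
/-!
Writing `c = cos φ`, the identity `cos 2φ = 2c² - 1` makes `w₋² / 4` a function of `c` alone,
`(26 + 4c - √(496 + 448c - 44c²)) / (6 - 2c)`. Rationalizing the numerator turns it into
`30 (1 - c) / (26 + 4c + √(496 + 448c - 44c²))`: for `c ∈ [-1, 1]` the numerator is nonnegative
and decreasing and the denominator positive and increasing, so it is strictly decreasing in `c`.
Since `cos` is strictly decreasing on `[0, π]`, `w₋` is strictly increasing there.
-/

open Real Set

/-- `w₋² / 4` as a function of `c = cos φ`. -/
noncomputable def lowerBranchSq (c : ℝ) : ℝ :=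
  (26 + 4 * c - √(496 + 448 * c - 44 * c ^ 2)) / (6 - 2 * c)

lemma lowerBranch_discriminant_eq (φ : ℝ) :
    474 + 448 * cos φ - 22 * cos (2 * φ) = 496 + 448 * cos φ - 44 * cos φ ^ 2 := by
  rw [cos_two_mul]; ring

section

variable {c : ℝ} (hc : c ∈ Icc (-1) 1)
include hc

lemma lowerBranch_discriminant_nonneg : 0 ≤ 496 + 448 * c - 44 * c ^ 2 := by
  nlinarith [hc.1, hc.2]

lemma lowerBranchSq_eq :
    lowerBranchSq c = 30 * (1 - c) / (26 + 4 * c + √(496 + 448 * c - 44 * c ^ 2)) := by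
  have hs := sq_sqrt (lowerBranch_discriminant_nonneg hc)
  have hs₀ := sqrt_nonneg (496 + 448 * c - 44 * c ^ 2)
  have hden : 0 < 26 + 4 * c + √(496 + 448 * c - 44 * c ^ 2) := by linarith [hc.1]
  rw [lowerBranchSq, div_eq_div_iff (by linarith [hc.2]) hden.ne']
  linear_combination -hs

lemma lowerBranchSq_nonneg : 0 ≤ lowerBranchSq c := by
  rw [lowerBranchSq_eq hc]
  have := sqrt_nonneg (496 + 448 * c - 44 * c ^ 2)
  exact div_nonneg (by linarith [hc.2]) (by linarith [hc.1])

end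

lemma strictAntiOn_lowerBranchSq : StrictAntiOn lowerBranchSq (Icc (-1) 1) := by
  intro a ha b hb hab
  rw [lowerBranchSq_eq ha, lowerBranchSq_eq hb]
  have hsqrt : √(496 + 448 * a - 44 * a ^ 2) ≤ √(496 + 448 * b - 44 * b ^ 2) :=
    sqrt_le_sqrt (by nlinarith [ha.2, hb.2])
  have hsa := sqrt_nonneg (496 + 448 * a - 44 * a ^ 2)
  rw [div_lt_div_iff₀ (by linarith [hb.1]) (by linarith [ha.1])]
  calc 30 * (1 - b) * (26 + 4 * a + √(496 + 448 * a - 44 * a ^ 2))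
      < 30 * (1 - a) * (26 + 4 * a + √(496 + 448 * a - 44 * a ^ 2)) := by
        gcongr; linarith [ha.1]
    _ ≤ 30 * (1 - a) * (26 + 4 * b + √(496 + 448 * b - 44 * b ^ 2)) := by
        gcongr; linarith [hb.2]

/-- The lower branch `w₋(φ)` of the P1DG–P2 numerical dispersion relation is
strictly monotonically increasing on `(0, π)`. -/
theorem lower_branch_strictMonoOn :
    StrictMonoOn
      (fun φ : ℝ => 2 * Real.sqrt ((26 + 4 * Real.cos φ
        - Real.sqrt (474 + 448 * Real.cos φ - 22 * Real.cos (2 * φ)))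
          / (6 - 2 * Real.cos φ)))
      (Set.Ioo 0 Real.pi) := by
  have hcos : MapsTo cos (Icc 0 π) (Icc (-1) 1) := fun φ _ => ⟨neg_one_le_cos φ, cos_le_one φ⟩
  have hsq : StrictMonoOn (fun φ => lowerBranchSq (cos φ)) (Icc 0 π) :=
    strictAntiOn_lowerBranchSq.comp strictAntiOn_cos hcos
  have hmono : StrictMonoOn (fun φ => 2 * √(lowerBranchSq (cos φ))) (Icc 0 π) :=
    fun x hx y hy hxy => by
      have := sqrt_lt_sqrt (lowerBranchSq_nonneg (hcos hx)) (hsq hx hy hxy)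
      dsimp only
      linarith
  simp_rw [lowerBranch_discriminant_eq]
  exact hmono.mono Ioo_subset_Icc_self
end

section
/- There is a spectral gap between the two branches of the P1DG–P2 dispersion relation: the supremum of w₋(φ) over φ ∈ [0, π] is strictly less than the infimum of w₊(φ) = 2√((26 + 4cos φ + √(474 + 448cos φ − 22cos 2φ))/(6 − 2cos φ)) over φ ∈ [0, π]. -/
open Real

lemma lower_bnd (φ : ℝ) :
    2 * Real.sqrt ((26 + 4 * Real.cos φ
        - Real.sqrt (474 + 448 * Real.cos φ - 22 * Real.cos (2 * φ)))
          / (6 - 2 * Real.cos φ)) ≤ 2 * Real.sqrt (5/2) := by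
  have hc1 := Real.cos_le_one φ
  have hc2 := Real.neg_one_le_cos φ
  set c := Real.cos φ with hc
  have h2 : Real.cos (2*φ) = 2*c^2 - 1 := Real.cos_two_mul φ
  have harg : 474 + 448*c - 22*Real.cos (2*φ) = 496 + 448*c - 44*c^2 := by
    rw [h2]; ring
  rw [show (474 + 448 * c - 22 * Real.cos (2 * φ)) = 496 + 448*c - 44*c^2 from harg]
  have hargnn : (0:ℝ) ≤ 496 + 448*c - 44*c^2 := by nlinarith
  have hS := Real.sq_sqrt hargnn
  set S := Real.sqrt (496+448*c-44*c^2) with hSdef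
  have hden : (0:ℝ) < 6 - 2*c := by linarith
  have hSlb : 11 + 9*c ≤ S := by
    rw [hSdef]
    rw [Real.le_sqrt (by linarith) hargnn]
    nlinarith
  have hfrac : (26 + 4*c - S) / (6 - 2*c) ≤ 5/2 := by
    rw [div_le_iff₀ hden]; nlinarith
  gcongr

lemma upper_bnd (φ : ℝ) :
    2 * Real.sqrt 3 ≤ 2 * Real.sqrt ((26 + 4 * Real.cos φ
        + Real.sqrt (474 + 448 * Real.cos φ - 22 * Real.cos (2 * φ)))
          / (6 - 2 * Real.cos φ)) := by
  have hc1 := Real.cos_le_one φ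
  have hc2 := Real.neg_one_le_cos φ
  set c := Real.cos φ with hc
  have h2 : Real.cos (2*φ) = 2*c^2 - 1 := Real.cos_two_mul φ
  have harg : 474 + 448*c - 22*Real.cos (2*φ) = 496 + 448*c - 44*c^2 := by
    rw [h2]; ring
  rw [show (474 + 448 * c - 22 * Real.cos (2 * φ)) = 496 + 448*c - 44*c^2 from harg]
  have hargnn : (0:ℝ) ≤ 496 + 448*c - 44*c^2 := by nlinarith
  have hS := Real.sq_sqrt hargnn
  set S := Real.sqrt (496+448*c-44*c^2) with hSdef
  have hSnn : 0 ≤ S := Real.sqrt_nonneg _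
  have hden : (0:ℝ) < 6 - 2*c := by linarith
  have hSlb : -8 - 10*c ≤ S := by
    rcases le_or_gt (-8 - 10*c) 0 with h | h
    · linarith
    · rw [hSdef, Real.le_sqrt (by linarith) hargnn]
      nlinarith
  have hfrac : (3:ℝ) ≤ (26 + 4*c + S) / (6 - 2*c) := by
    rw [le_div_iff₀ hden]; nlinarith
  gcongr

/-- Spectral gap: the supremum of the lower branch `w₋` over `[0, π]` is
strictly less than the infimum of the upper branch `w₊` over `[0, π]`. -/
theorem spectral_gap :
    sSup ((fun φ : ℝ => 2 * Real.sqrt ((26 + 4 * Real.cos φ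
        - Real.sqrt (474 + 448 * Real.cos φ - 22 * Real.cos (2 * φ)))
          / (6 - 2 * Real.cos φ))) '' Set.Icc 0 Real.pi)
      < sInf ((fun φ : ℝ => 2 * Real.sqrt ((26 + 4 * Real.cos φ
        + Real.sqrt (474 + 448 * Real.cos φ - 22 * Real.cos (2 * φ)))
          / (6 - 2 * Real.cos φ))) '' Set.Icc 0 Real.pi) := by
  have hne : (Set.Icc (0:ℝ) Real.pi).Nonempty :=
    ⟨0, le_refl 0, Real.pi_nonneg⟩
  have h1 : sSup ((fun φ : ℝ => 2 * Real.sqrt ((26 + 4 * Real.cos φ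
        - Real.sqrt (474 + 448 * Real.cos φ - 22 * Real.cos (2 * φ)))
          / (6 - 2 * Real.cos φ))) '' Set.Icc 0 Real.pi) ≤ 2 * Real.sqrt (5/2) := by
    apply Real.sSup_le
    · rintro y ⟨φ, _, rfl⟩
      exact lower_bnd φ
    · positivity
  have h2 : 2 * Real.sqrt 3 ≤ sInf ((fun φ : ℝ => 2 * Real.sqrt ((26 + 4 * Real.cos φ
        + Real.sqrt (474 + 448 * Real.cos φ - 22 * Real.cos (2 * φ)))
          / (6 - 2 * Real.cos φ))) '' Set.Icc 0 Real.pi) := by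
    apply le_csInf (hne.image _)
    rintro y ⟨φ, _, rfl⟩
    exact upper_bnd φ
  have hmid : 2 * Real.sqrt (5/2) < 2 * Real.sqrt 3 := by
    have := Real.sqrt_lt_sqrt (by norm_num : (0:ℝ) ≤ 5/2) (by norm_num : (5:ℝ)/2 < 3)
    linarith
  linarith
end

section
/- For the Störmer–Verlet scheme given by M^u(uᵢ^{n+1/2} − uᵢⁿ) = −(Δt/2)Cᵢhⁿ, M^h(h^{n+1} − hⁿ) = Δt Σᵢ Cᵢᵀ uᵢ^{n+1/2}, M^u(uᵢ^{n+1} − uᵢ^{n+1/2}) = −(Δt/2)Cᵢh^{n+1}, the map (uⁿ, hⁿ) ↦ (u^{n+1}, h^{n+1}) exactly conserves the modified energy Ẽ = ½Σᵢuᵢᵀ M^u uᵢ + ½hᵀ M^h h − (Δt²/8) Σᵢ hᵀ Cᵢᵀ (M^u)⁻¹ Cᵢ h. -/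
open Matrix

private lemma dot_transpose_mulVec {n m : ℕ} (A : Matrix (Fin n) (Fin m) ℝ)
    (x : Fin m → ℝ) (y : Fin n → ℝ) :
    x ⬝ᵥ Aᵀ.mulVec y = (A.mulVec x) ⬝ᵥ y := by
  rw [Matrix.dotProduct_mulVec, Matrix.vecMul_transpose]

private lemma dot_sum {n : ℕ} {ι : Type*} (s : Finset ι) (x : Fin n → ℝ)
    (f : ι → Fin n → ℝ) : x ⬝ᵥ (∑ i ∈ s, f i) = ∑ i ∈ s, x ⬝ᵥ f i := by
  simp only [dotProduct, Finset.sum_apply, Finset.mul_sum]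
  exact Finset.sum_comm

private lemma sv_key {mu mh : ℕ}
    (Mu : Matrix (Fin mu) (Fin mu) ℝ) (hMu : Mu.PosDef)
    (C : Matrix (Fin mu) (Fin mh) ℝ) (Δt : ℝ)
    (u uhalf u1 : Fin mu → ℝ) (h h1 : Fin mh → ℝ)
    (s1 : Mu.mulVec (uhalf - u) = -(Δt / 2) • C.mulVec h)
    (s3 : Mu.mulVec (u1 - uhalf) = -(Δt / 2) • C.mulVec h1) :
    (1/2) * (u1 ⬝ᵥ Mu.mulVec u1) - (Δt ^ 2 / 8) * (h1 ⬝ᵥ (Cᵀ * Mu⁻¹ * C).mulVec h1)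
      - ((1/2) * (u ⬝ᵥ Mu.mulVec u) - (Δt ^ 2 / 8) * (h ⬝ᵥ (Cᵀ * Mu⁻¹ * C).mulVec h))
      = -(Δt / 2) * (uhalf ⬝ᵥ C.mulVec (h + h1)) := by
  have hdet : IsUnit Mu.det := isUnit_iff_ne_zero.2 hMu.det_pos.ne'
  have hT : Muᵀ = Mu := (by simpa using hMu.isHermitian : Mu.IsSymm)
  set a : Fin mu → ℝ := Mu⁻¹.mulVec (C.mulVec h) with ha
  set b : Fin mu → ℝ := Mu⁻¹.mulVec (C.mulVec h1) with hb
  have hMa : Mu.mulVec a = C.mulVec h := by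
    rw [ha, Matrix.mulVec_mulVec, Matrix.mul_nonsing_inv _ hdet, Matrix.one_mulVec]
  have hMb : Mu.mulVec b = C.mulVec h1 := by
    rw [hb, Matrix.mulVec_mulVec, Matrix.mul_nonsing_inv _ hdet, Matrix.one_mulVec]
  have hinv : ∀ x : Fin mu → ℝ, Mu⁻¹.mulVec (Mu.mulVec x) = x := fun x => by
    rw [Matrix.mulVec_mulVec, Matrix.nonsing_inv_mul _ hdet, Matrix.one_mulVec]
  have huhalf : uhalf = u - (Δt / 2) • a := by
    have h2 := congrArg Mu⁻¹.mulVec s1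
    rw [hinv, Matrix.mulVec_smul] at h2
    have : uhalf - u = -(Δt / 2) • a := by rw [h2, neg_smul, ← ha]
    rw [sub_eq_iff_eq_add] at this
    rw [this]; rw [neg_smul]; abel
  have hu1 : u1 = u - (Δt / 2) • a - (Δt / 2) • b := by
    have h2 := congrArg Mu⁻¹.mulVec s3
    rw [hinv, Matrix.mulVec_smul] at h2
    have : u1 - uhalf = -(Δt / 2) • b := by rw [h2, neg_smul, ← hb]
    rw [sub_eq_iff_eq_add] at this
    rw [this, huhalf]; rw [neg_smul]; abel
  have hsym : ∀ x y : Fin mu → ℝ, x ⬝ᵥ Mu.mulVec y = y ⬝ᵥ Mu.mulVec x := fun x y => by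
    rw [Matrix.dotProduct_mulVec, ← Matrix.mulVec_transpose, hT, dotProduct_comm]
  have hq : ∀ x : Fin mh → ℝ,
      x ⬝ᵥ (Cᵀ * Mu⁻¹ * C).mulVec x
        = (Mu⁻¹.mulVec (C.mulVec x)) ⬝ᵥ Mu.mulVec (Mu⁻¹.mulVec (C.mulVec x)) := fun x => by
    rw [← Matrix.mulVec_mulVec, ← Matrix.mulVec_mulVec, dot_transpose_mulVec]
    have : Mu.mulVec (Mu⁻¹.mulVec (C.mulVec x)) = C.mulVec x := by
      rw [Matrix.mulVec_mulVec, Matrix.mul_nonsing_inv _ hdet, Matrix.one_mulVec]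
    rw [this, dotProduct_comm]
  rw [hq h, hq h1, ← ha, ← hb, hu1, huhalf]
  simp only [Matrix.mulVec_add, Matrix.mulVec_sub, Matrix.mulVec_smul,
    dotProduct_add, dotProduct_sub, sub_dotProduct,
    smul_dotProduct, dotProduct_smul, smul_eq_mul, ← hMa, ← hMb]
  rw [hsym u a, hsym u b, hsym a b]
  ring

/-- The Störmer–Verlet scheme for the semi-discrete wave equation exactly
conserves the modified energy
`Ẽ = ½ Σᵢ uᵢᵀ Mᵘ uᵢ + ½ hᵀ Mʰ h − (Δt²/8) Σᵢ hᵀ Cᵢᵀ (Mᵘ)⁻¹ Cᵢ h`. -/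
theorem stormer_verlet_modified_energy
    (mu mh d : ℕ)
    (Mu : Matrix (Fin mu) (Fin mu) ℝ) (Mh : Matrix (Fin mh) (Fin mh) ℝ)
    (hMu : Mu.PosDef) (hMh : Mh.PosDef)
    (C : Fin d → Matrix (Fin mu) (Fin mh) ℝ)
    (Δt : ℝ) (hΔt : 0 < Δt)
    (u uhalf u1 : Fin d → (Fin mu → ℝ)) (h h1 : Fin mh → ℝ)
    (step1 : ∀ i, Mu.mulVec (uhalf i - u i) = -(Δt / 2) • (C i).mulVec h)
    (step2 : Mh.mulVec (h1 - h) = Δt • ∑ i, (C i)ᵀ.mulVec (uhalf i))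
    (step3 : ∀ i, Mu.mulVec (u1 i - uhalf i) = -(Δt / 2) • (C i).mulVec h1) :
    (1/2) * ∑ i, u1 i ⬝ᵥ Mu.mulVec (u1 i) + (1/2) * (h1 ⬝ᵥ Mh.mulVec h1)
        - (Δt ^ 2 / 8) * ∑ i, h1 ⬝ᵥ ((C i)ᵀ * Mu⁻¹ * C i).mulVec h1
      = (1/2) * ∑ i, u i ⬝ᵥ Mu.mulVec (u i) + (1/2) * (h ⬝ᵥ Mh.mulVec h)
        - (Δt ^ 2 / 8) * ∑ i, h ⬝ᵥ ((C i)ᵀ * Mu⁻¹ * C i).mulVec h := by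
  have hMhT : Mhᵀ = Mh := (by simpa using hMh.isHermitian : Mh.IsSymm)
  -- potential energy change
  have hpot : h1 ⬝ᵥ Mh.mulVec h1 - h ⬝ᵥ Mh.mulVec h
      = Δt * ∑ i, uhalf i ⬝ᵥ (C i).mulVec (h + h1) := by
    have hsymh : ∀ x y : Fin mh → ℝ, x ⬝ᵥ Mh.mulVec y = y ⬝ᵥ Mh.mulVec x := fun x y => by
      rw [Matrix.dotProduct_mulVec, ← Matrix.mulVec_transpose, hMhT, dotProduct_comm]
    have key : (h1 + h) ⬝ᵥ Mh.mulVec (h1 - h)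
        = Δt * ∑ i, uhalf i ⬝ᵥ (C i).mulVec (h + h1) := by
      rw [step2, dotProduct_smul, smul_eq_mul]
      congr 1
      rw [dot_sum]
      refine Finset.sum_congr rfl fun i _ => ?_
      rw [dot_transpose_mulVec, dotProduct_comm]
      congr 1
      rw [add_comm]
    have expand : (h1 + h) ⬝ᵥ Mh.mulVec (h1 - h)
        = h1 ⬝ᵥ Mh.mulVec h1 - h ⬝ᵥ Mh.mulVec h := by
      simp only [Matrix.mulVec_sub, dotProduct_sub, add_dotProduct]
      have := hsymh h h1
      linarith
    linarith [key, expand]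
  -- kinetic + correction energy change, per component
  have hkin : ∀ i, (1/2) * (u1 i ⬝ᵥ Mu.mulVec (u1 i))
      - (Δt ^ 2 / 8) * (h1 ⬝ᵥ ((C i)ᵀ * Mu⁻¹ * C i).mulVec h1)
      - ((1/2) * (u i ⬝ᵥ Mu.mulVec (u i))
        - (Δt ^ 2 / 8) * (h ⬝ᵥ ((C i)ᵀ * Mu⁻¹ * C i).mulVec h))
      = -(Δt / 2) * (uhalf i ⬝ᵥ (C i).mulVec (h + h1)) := fun i =>
    sv_key Mu hMu (C i) Δt (u i) (uhalf i) (u1 i) h h1 (step1 i) (step3 i)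
  have hsum : ∑ i, ((1/2) * (u1 i ⬝ᵥ Mu.mulVec (u1 i))
      - (Δt ^ 2 / 8) * (h1 ⬝ᵥ ((C i)ᵀ * Mu⁻¹ * C i).mulVec h1)
      - ((1/2) * (u i ⬝ᵥ Mu.mulVec (u i))
        - (Δt ^ 2 / 8) * (h ⬝ᵥ ((C i)ᵀ * Mu⁻¹ * C i).mulVec h)))
      = ∑ i, -(Δt / 2) * (uhalf i ⬝ᵥ (C i).mulVec (h + h1)) :=
    Finset.sum_congr rfl fun i _ => hkin i
  simp only [Finset.sum_sub_distrib, ← Finset.mul_sum] at hsum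
  linear_combination hsum + (1/2) * hpot
end
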